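/- Let $n \geq 1$, $p \in (1/2, 1]$, and let $S$ be a set of size $n$ with a distinguished subset $I \subseteq S$. Consider two random processes producing a nonnegative integer: (1) for each element $y \in S$, independently flip a Bernoulli coin with success probability $p$, and count the number of $y \in I$ whose coin succeeded; (2) sample $s \sim \mathrm{Bin}(n, 2(1-p))$, choose a uniformly random subset $T \subseteq S$ with $|T| = s$, and output $|I \setminus T|$ plus the number of successes among $|I \cap T|$ independent fair coin flips. Then the two outputs have the same probability mass function: for all $z \in \mathbb{Z}_{\geq 0}$, $\Pr[\text{output}_1 = z] = \Pr[\text{output}_2 = z]$. -/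

import Mathlib

open PMF
open scoped ENNReal

variable {α : Type*} [DecidableEq α]

/-- Count successes: for each element of the list, flip an independent
Bernoulli coin with success probability `p` and count those elements
satisfying `P` whose coin succeeded. -/
noncomputable def flipCount (p : ℝ≥0∞) (hp : p ≤ 1) (P : α → Bool) : List α → PMF ℕ
  | [] => PMF.pure 0
  | a :: l =>
      (PMF.bernoulli p.toNNReal (by simpa using ENNReal.toNNReal_mono ENNReal.one_ne_top hp)).bind fun b =>
        (flipCount p hp P l).map fun n => n + (if b && P a then 1 else 0)

lemma bern_apply' (p : ℝ≥0∞) (hp : p ≤ 1) (h : p.toNNReal ≤ 1) (b : Bool) :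
    PMF.bernoulli p.toNNReal h b = cond b p (1 - p) := by
  have hne : p ≠ ⊤ := ne_top_of_le_ne_top ENNReal.one_ne_top hp
  rw [bernoulli_apply]
  cases b <;> simp [ENNReal.coe_toNNReal hne]

lemma binom_apply' (q : ℝ≥0∞) (hq : q ≤ 1) (h : q.toNNReal ≤ 1) (n : ℕ) (i : Fin (n + 1)) :
    PMF.binomial q.toNNReal h n i
      = q ^ (i : ℕ) * (1 - q) ^ ((Fin.last n - i) : ℕ) * (n.choose i : ℝ≥0∞) := by
  have hne : q ≠ ⊤ := ne_top_of_le_ne_top ENNReal.one_ne_top hq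
  rw [PMF.binomial_apply]
  push_cast
  rw [ENNReal.coe_toNNReal hne]

lemma half_binom' (h : (1/2 : NNReal) ≤ 1) (n : ℕ) (i : Fin (n + 1)) :
    PMF.binomial (1/2) h n i
      = (1/2 : ℝ≥0∞) ^ (i : ℕ) * (1 - 1/2) ^ ((Fin.last n - i) : ℕ) * (n.choose i : ℝ≥0∞) := by
  rw [PMF.binomial_apply]
  push_cast
  simp

lemma flip_step (p : ℝ≥0∞) (hp : p ≤ 1) (k z : ℕ) :
    (1-p) * ((k.choose z : ℝ≥0∞) * p ^ z * (1-p) ^ (k - z))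
      + p * (if z = 0 then 0 else (k.choose (z-1) : ℝ≥0∞) * p ^ (z-1) * (1-p) ^ (k - (z-1)))
    = ((k+1).choose z : ℝ≥0∞) * p ^ z * (1-p) ^ (k+1-z) := by
  rcases z with _ | n
  · simp [pow_succ]; ring
  · rw [if_neg n.succ_ne_zero]
    have e3 : n + 1 - 1 = n := rfl
    rw [e3, Nat.choose_succ_succ k n]
    rcases le_or_gt (n+1) k with h | h
    · have e1 : k + 1 - (n+1) = (k - (n+1)) + 1 := by omega
      have e2 : k - n = (k - (n+1)) + 1 := by omega
      rw [e1, e2]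
      push_cast
      ring
    · rcases eq_or_lt_of_le (Nat.lt_succ_iff.mp h) with h' | h'
      · subst h'
        simp [Nat.choose_succ_self, Nat.choose_self, pow_succ]
        ring
      · rw [Nat.choose_eq_zero_of_lt h', Nat.choose_eq_zero_of_lt (show k < n + 1 by omega)]
        simp

lemma map_zero_aux (μ : PMF ℕ) (z : ℕ) :
    (μ.map fun n => n) z = μ z := by
  have : (fun n : ℕ => n) = id := rfl
  rw [this, PMF.map_id]

lemma map_succ_aux (μ : PMF ℕ) (z : ℕ) :
    (μ.map fun n => n + 1) z
      = if z = 0 then 0 else μ (z-1) := by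
  rcases z with _ | n
  · simp [PMF.map_apply]
  · rw [PMF.map_apply, if_neg n.succ_ne_zero]
    rw [tsum_eq_single n]
    · simp
    · intro b hb
      rw [if_neg (by omega)]

lemma flipCount_apply (p : ℝ≥0∞) (hp : p ≤ 1) (P : α → Bool) (l : List α) (z : ℕ) :
    flipCount p hp P l z
      = ((l.countP P).choose z : ℝ≥0∞) * p ^ z * (1 - p) ^ (l.countP P - z) := by
  induction l generalizing z with
  | nil =>
    simp only [flipCount, List.countP_nil, PMF.pure_apply]
    rcases Nat.eq_zero_or_pos z with hz | hz
    · subst hz; simp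
    · rw [if_neg (by omega), Nat.choose_eq_zero_of_lt hz]
      simp
  | cons a l ih =>
    show ((PMF.bernoulli p.toNNReal (by have h := ENNReal.toNNReal_mono ENNReal.one_ne_top hp; rwa [ENNReal.toNNReal_one] at h)).bind fun b =>
        (flipCount p hp P l).map fun n => n + (if b && P a then 1 else 0)) z = _
    rw [PMF.bind_apply, tsum_bool]
    have c0 : (if (false : Bool) = true then (1:ℕ) else 0) = 0 := rfl
    have c1 : (if (true : Bool) = true then (1:ℕ) else 0) = 1 := rfl
    have c1' : (if True then (1:ℕ) else 0) = 1 := rfl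
    rcases hPa : P a with _ | _
    · simp only [Bool.and_false, c0, add_zero]
      simp only [map_zero_aux]
      rw [List.countP_cons_of_neg (by simp [hPa])]
      simp only [bern_apply' p hp]
      rw [ih z]
      simp only [Bool.cond_false, Bool.cond_true]
      rw [← add_mul, tsub_add_cancel_of_le hp, one_mul]
    · simp only [Bool.and_true, Bool.false_and, Bool.true_and, c0, c1, c1', add_zero]
      simp only [map_zero_aux, map_succ_aux]
      simp only [bern_apply' p hp]
      simp only [Bool.cond_false, Bool.cond_true]
      rw [List.countP_cons_of_pos (by simp [hPa])]
      rw [ih z]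
      have : (if z = 0 then 0 else flipCount p hp P l (z-1))
          = (if z = 0 then 0 else ((l.countP P).choose (z-1) : ℝ≥0∞) * p ^ (z-1) * (1-p) ^ (l.countP P - (z-1))) := by
        rcases z with _ | n
        · simp
        · rw [if_neg n.succ_ne_zero, if_neg n.succ_ne_zero, ih]
      rw [this, flip_step p hp (l.countP P) z]

/-- Uniform distribution over the subsets of `S` of cardinality `s`. -/
noncomputable def uniformSubsets (S : Finset α) (s : ℕ) (h : s ≤ S.card) :
    PMF (Finset α) :=
  PMF.uniformOfFinset (S.powerset.filter fun T => T.card = s) (by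
    obtain ⟨t, ht, hc⟩ := Finset.exists_subset_card_eq h
    exact ⟨t, Finset.mem_filter.2 ⟨Finset.mem_powerset.2 ht, hc⟩⟩)

/-- Process (2): sample `s ~ Bin(|S|, q)`, choose a uniformly random subset
`T ⊆ S` with `|T| = s`, and output `|I \ T|` plus the number of successes
among `|I ∩ T|` independent fair coin flips. -/
noncomputable def procSub (S I : Finset α) (q : ℝ≥0∞) (hq : q ≤ 1) : PMF ℕ :=
  (PMF.binomial q.toNNReal (by simpa using ENNReal.toNNReal_mono ENNReal.one_ne_top hq) S.card).bind fun s =>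
    (uniformSubsets S s.val (Nat.le_of_lt_succ s.isLt)).bind fun T =>
      (PMF.binomial (1/2) (by exact NNReal.half_le_self 1) ((I ∩ T).card)).map
        fun k => (I \ T).card + k.val

lemma choose_id {m z i : ℕ} (hiz : i ≤ z) (hzm : z ≤ m) :
    (m.choose (m-z+i)) * ((m-z+i).choose i) = m.choose z * z.choose i := by
  rw [Nat.choose_mul (show i ≤ m-z+i by omega)]
  rw [Nat.choose_mul hiz]
  congr 1
  have e : m - z + i - i = m - z := by omega
  rw [e, ← Nat.choose_symm (show z - i ≤ m - i by omega)]
  congr 1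
  omega

lemma core (a b : ℝ≥0∞) (m z : ℕ) :
    ∑ j ∈ Finset.range (m+1), (m.choose j : ℝ≥0∞) * b ^ (m-j) * a ^ j *
      (∑ k ∈ Finset.range (j+1), (j.choose k : ℝ≥0∞) * (if z = (m-j) + k then 1 else 0))
    = (m.choose z : ℝ≥0∞) * (a+b) ^ z * a ^ (m-z) := by
  rcases le_or_gt z m with hzm | hzm
  · have hinner : ∀ j ∈ Finset.range (m+1),
        (m.choose j : ℝ≥0∞) * b ^ (m-j) * a ^ j *
          (∑ k ∈ Finset.range (j+1), (j.choose k : ℝ≥0∞) * (if z = (m-j) + k then 1 else 0))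
        = if m - z ≤ j then
            (m.choose j : ℝ≥0∞) * b ^ (m-j) * a ^ j * ((j.choose (z - (m-j))) : ℝ≥0∞) else 0 := by
      intro j hj
      rw [Finset.mem_range] at hj
      have hj' : j ≤ m := by omega
      rw [Finset.sum_eq_single (z - (m - j))]
      · rcases le_or_gt (m - z) j with h | h
        · rw [if_pos h, if_pos (by omega), mul_one]
        · rw [if_neg (by omega), if_neg (by omega), mul_zero, mul_zero]
      · intro k hk hkne
        rw [if_neg (by omega), mul_zero]
      · intro hk
        exact absurd (Finset.mem_range.2 (by omega)) hk
    rw [Finset.sum_congr rfl hinner, ← Finset.sum_filter]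
    have hset : (Finset.range (m+1)).filter (fun j => m - z ≤ j) = Finset.Ico (m-z) (m+1) := by
      ext j
      simp only [Finset.mem_filter, Finset.mem_range, Finset.mem_Ico]
      omega
    rw [hset, Finset.sum_Ico_eq_sum_range]
    have hz1 : m + 1 - (m - z) = z + 1 := by omega
    rw [hz1]
    have hterm : ∀ i ∈ Finset.range (z+1),
        (m.choose (m-z+i) : ℝ≥0∞) * b ^ (m-(m-z+i)) * a ^ (m-z+i) * ((m-z+i).choose (z - (m-(m-z+i))) : ℝ≥0∞)
        = ((m.choose z : ℝ≥0∞) * a ^ (m-z)) * (a ^ i * b ^ (z-i) * (z.choose i : ℝ≥0∞)) := by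
      intro i hi
      rw [Finset.mem_range] at hi
      have hi' : i ≤ z := by omega
      have e1 : m - (m-z+i) = z - i := by omega
      have e2 : z - (z - i) = i := by omega
      rw [e1, e2, pow_add]
      have := choose_id hi' hzm
      calc (m.choose (m-z+i) : ℝ≥0∞) * b ^ (z-i) * (a ^ (m-z) * a ^ i) * ((m-z+i).choose i : ℝ≥0∞)
          = ((m.choose (m-z+i) * ((m-z+i).choose i) : ℕ) : ℝ≥0∞) * b ^ (z-i) * a ^ (m-z) * a ^ i := by
            push_cast; ring
        _ = ((m.choose z * z.choose i : ℕ) : ℝ≥0∞) * b ^ (z-i) * a ^ (m-z) * a ^ i := by rw [this]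
        _ = ((m.choose z : ℝ≥0∞) * a ^ (m-z)) * (a ^ i * b ^ (z-i) * (z.choose i : ℝ≥0∞)) := by
            push_cast; ring
    rw [Finset.sum_congr rfl hterm, ← Finset.mul_sum, ← add_pow]
    ring
  · rw [Nat.choose_eq_zero_of_lt hzm]
    rw [Finset.sum_eq_zero, Nat.cast_zero, zero_mul, zero_mul]
    intro j hj
    rw [Finset.mem_range] at hj
    rw [Finset.sum_eq_zero, mul_zero]
    intro k hk
    rw [Finset.mem_range] at hk
    rw [if_neg (by omega), mul_zero]



-- sum over powersets with binomial weights is 1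
lemma powerset_weight_sum (u : Finset α) (q : ℝ≥0∞) (hq : q ≤ 1) :
    ∑ B ∈ u.powerset, q ^ B.card * (1-q) ^ (u.card - B.card) = 1 := by
  rw [Finset.sum_powerset_apply_card (f := fun j => q ^ j * (1-q) ^ (u.card - j))]
  have : ∀ j ∈ Finset.range (u.card + 1),
      u.card.choose j • (q ^ j * (1-q) ^ (u.card - j))
        = q ^ j * (1-q) ^ (u.card - j) * (u.card.choose j : ℝ≥0∞) := by
    intro j hj
    rw [nsmul_eq_mul]; ring
  rw [Finset.sum_congr rfl this, ← add_pow, add_tsub_cancel_of_le hq, one_pow]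

-- step 1: unfold the two binds into a sum over the powerset
lemma procSub_apply_powerset (S I : Finset α) (q : ℝ≥0∞) (hq : q ≤ 1) (z : ℕ) :
    procSub S I q hq z
      = ∑ T ∈ S.powerset, q ^ T.card * (1-q) ^ (S.card - T.card) *
          ((PMF.binomial (1/2) (by exact NNReal.half_le_self 1) ((I ∩ T).card)).map
            (fun k => (I \ T).card + k.val) z) := by
  classical
  rw [procSub, PMF.bind_apply, tsum_fintype]
  have huni : ∀ (s : ℕ) (hs : s ≤ S.card) (F : Finset α → ℝ≥0∞),
      (∑' T, uniformSubsets S s hs T * F T)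
        = ((S.card.choose s : ℝ≥0∞))⁻¹ * ∑ T ∈ S.powersetCard s, F T := by
    intro s hs F
    rw [tsum_eq_sum (s := S.powerset.filter fun T => T.card = s)
      (fun T hT => by rw [uniformSubsets, PMF.uniformOfFinset_apply, if_neg hT, zero_mul])]
    rw [Finset.mul_sum]
    rw [show (S.powerset.filter fun T => T.card = s) = S.powersetCard s from
      Finset.powersetCard_eq_filter.symm]
    apply Finset.sum_congr rfl
    intro T hT
    rw [uniformSubsets, PMF.uniformOfFinset_apply,
      if_pos (Finset.powersetCard_eq_filter ▸ hT)]
    rw [show (S.powerset.filter fun T => T.card = s) = S.powersetCard s from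
      Finset.powersetCard_eq_filter.symm, Finset.card_powersetCard]
  have hstep : ∀ s : Fin (S.card + 1),
      (PMF.binomial q.toNNReal (by have h := ENNReal.toNNReal_mono ENNReal.one_ne_top hq; rwa [ENNReal.toNNReal_one] at h) S.card s) *
        ((uniformSubsets S s.val (Nat.le_of_lt_succ s.isLt)).bind
          (fun T => (PMF.binomial (1/2) (by exact NNReal.half_le_self 1) ((I ∩ T).card)).map
            (fun k => (I \ T).card + k.val)) z)
      = ∑ T ∈ S.powersetCard s.val, q ^ T.card * (1-q) ^ (S.card - T.card) *
          ((PMF.binomial (1/2) (by exact NNReal.half_le_self 1) ((I ∩ T).card)).map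
            (fun k => (I \ T).card + k.val) z) := by
    intro s
    rw [PMF.bind_apply, huni s.val (Nat.le_of_lt_succ s.isLt)]
    simp only [binom_apply' q hq]
    rw [Fin.val_last]
    have hchoose : (S.card.choose s.val : ℝ≥0∞) ≠ 0 := by
      have := Nat.choose_pos (Nat.le_of_lt_succ s.isLt)
      exact_mod_cast Nat.pos_iff_ne_zero.mp this
    have hchoose' : (S.card.choose s.val : ℝ≥0∞) ≠ ⊤ := ENNReal.natCast_ne_top _
    rw [Finset.mul_sum, Finset.mul_sum]
    apply Finset.sum_congr rfl
    intro T hT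
    have hTc : T.card = s.val := (Finset.mem_powersetCard.1 hT).2
    rw [hTc]
    calc q ^ s.val * (1-q) ^ (S.card - s.val) * (S.card.choose s.val : ℝ≥0∞) *
          ((S.card.choose s.val : ℝ≥0∞)⁻¹ *
            ((PMF.binomial (1/2) (by exact NNReal.half_le_self 1) ((I ∩ T).card)).map
              (fun k => (I \ T).card + k.val) z))
        = ((S.card.choose s.val : ℝ≥0∞) * (S.card.choose s.val : ℝ≥0∞)⁻¹) *
            (q ^ s.val * (1-q) ^ (S.card - s.val) *
              ((PMF.binomial (1/2) (by exact NNReal.half_le_self 1) ((I ∩ T).card)).map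
                (fun k => (I \ T).card + k.val) z)) := by ring
      _ = _ := by rw [ENNReal.mul_inv_cancel hchoose hchoose', one_mul]
  rw [Finset.sum_congr rfl (fun s _ => hstep s)]
  rw [Fin.sum_univ_eq_sum_range
    (fun s => ∑ T ∈ S.powersetCard s, q ^ T.card * (1-q) ^ (S.card - T.card) *
      ((PMF.binomial (1/2) (by exact NNReal.half_le_self 1) ((I ∩ T).card)).map
        (fun k => (I \ T).card + k.val) z))]
  rw [Finset.powerset_card_disjiUnion]
  exact (Finset.sum_disjiUnion _ _ _).symm

lemma sum_powerset_split (S I : Finset α) (hI : I ⊆ S) (f : Finset α → ℝ≥0∞) :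
    ∑ T ∈ S.powerset, f T = ∑ A ∈ I.powerset, ∑ B ∈ (S \ I).powerset, f (A ∪ B) := by
  rw [← Finset.sum_product' (f := fun A B => f (A ∪ B))]
  apply Finset.sum_nbij' (i := fun T => (T ∩ I, T \ I)) (j := fun P => P.1 ∪ P.2)
  · intro T hT
    rw [Finset.mem_powerset] at hT
    rw [Finset.mem_product, Finset.mem_powerset, Finset.mem_powerset]
    constructor
    · exact Finset.inter_subset_right
    · intro x hx
      rw [Finset.mem_sdiff] at hx ⊢
      exact ⟨hT hx.1, hx.2⟩
  · intro P hP
    rw [Finset.mem_product, Finset.mem_powerset, Finset.mem_powerset] at hP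
    rw [Finset.mem_powerset]
    intro x hx
    rcases Finset.mem_union.1 hx with h | h
    · exact hI (hP.1 h)
    · exact (Finset.mem_sdiff.1 (hP.2 h)).1
  · intro T hT
    ext x
    simp only [Finset.mem_union, Finset.mem_inter, Finset.mem_sdiff]
    tauto
  · intro P hP
    rw [Finset.mem_product, Finset.mem_powerset, Finset.mem_powerset] at hP
    obtain ⟨h1, h2⟩ := hP
    have hd : ∀ x ∈ P.2, x ∉ I := fun x hx => (Finset.mem_sdiff.1 (h2 hx)).2
    have e1 : (P.1 ∪ P.2) ∩ I = P.1 := by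
      ext x
      simp only [Finset.mem_inter, Finset.mem_union]
      constructor
      · rintro ⟨h | h, hxI⟩
        · exact h
        · exact absurd hxI (hd x h)
      · intro h; exact ⟨Or.inl h, h1 h⟩
    have e2 : (P.1 ∪ P.2) \ I = P.2 := by
      ext x
      simp only [Finset.mem_sdiff, Finset.mem_union]
      constructor
      · rintro ⟨h | h, hxI⟩
        · exact absurd (h1 h) hxI
        · exact h
      · intro h; exact ⟨Or.inr h, hd x h⟩
    exact Prod.ext e1 e2
  · intro T hT
    congr 1
    ext x
    simp only [Finset.mem_union, Finset.mem_inter, Finset.mem_sdiff]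
    tauto

lemma binHalf_map (j w z : ℕ) :
    ((PMF.binomial (1/2) (by exact NNReal.half_le_self 1) j).map (fun k => w + k.val)) z
      = (1/2 : ℝ≥0∞)^j * ∑ k ∈ Finset.range (j+1),
          (j.choose k : ℝ≥0∞) * (if z = w + k then 1 else 0) := by
  rw [PMF.map_apply, tsum_fintype, Finset.mul_sum,
    ← Fin.sum_univ_eq_sum_range
      (fun k => (1/2 : ℝ≥0∞)^j * ((j.choose k : ℝ≥0∞) * (if z = w + k then 1 else 0))) (j+1)]
  refine Finset.sum_congr rfl (fun k _ => ?_)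
  have hk : k.val ≤ j := Nat.le_of_lt_succ k.isLt
  have h12 : (1:ℝ≥0∞) - 1/2 = 1/2 := by
    rw [one_div, ENNReal.one_sub_inv_two]
  have hpow : (1/2:ℝ≥0∞)^(k.val) * (1/2:ℝ≥0∞)^(j-k.val) = (1/2:ℝ≥0∞)^j := by
    rw [← pow_add]
    congr 1
    omega
  by_cases hz : z = w + k.val
  · rw [if_pos hz, if_pos hz, half_binom', Fin.val_last, h12, mul_one, ← hpow]
    try ring
  · rw [if_neg hz, if_neg hz, mul_zero, mul_zero]

lemma procSub_apply_closed (S I : Finset α) (hI : I ⊆ S) (q : ℝ≥0∞) (hq : q ≤ 1) (z : ℕ) :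
    procSub S I q hq z
      = (I.card.choose z : ℝ≥0∞) * (q * (1/2) + (1-q)) ^ z * (q * (1/2)) ^ (I.card - z) := by
  classical
  set m := I.card with hm
  set c := (S \ I).card with hc
  have hmn : m + c = S.card := by
    have h1 : (S \ I).card = S.card - I.card := Finset.card_sdiff_of_subset hI
    have h2 : I.card ≤ S.card := Finset.card_le_card hI
    omega
  rw [procSub_apply_powerset, sum_powerset_split S I hI]
  have hAB : ∀ A ∈ I.powerset, ∀ B ∈ (S \ I).powerset,
      q ^ (A ∪ B).card * (1-q) ^ (S.card - (A ∪ B).card) *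
        ((PMF.binomial (1/2) (by exact NNReal.half_le_self 1) ((I ∩ (A ∪ B)).card)).map
          (fun k => (I \ (A ∪ B)).card + k.val) z)
      = (q ^ A.card * (1-q) ^ (m - A.card) *
          ((PMF.binomial (1/2) (by exact NNReal.half_le_self 1) (A.card)).map
            (fun k => (m - A.card) + k.val) z))
        * (q ^ B.card * (1-q) ^ (c - B.card)) := by
    intro A hA B hB
    rw [Finset.mem_powerset] at hA hB
    have hBI : ∀ x ∈ B, x ∉ I := fun x hx => (Finset.mem_sdiff.1 (hB hx)).2
    have hd : Disjoint A B := by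
      rw [Finset.disjoint_left]
      intro x hxA hxB
      exact hBI x hxB (hA hxA)
    have e1 : I ∩ (A ∪ B) = A := by
      ext x
      simp only [Finset.mem_inter, Finset.mem_union]
      constructor
      · rintro ⟨hxI, h | h⟩
        · exact h
        · exact absurd hxI (hBI x h)
      · intro h; exact ⟨hA h, Or.inl h⟩
    have e2 : I \ (A ∪ B) = I \ A := by
      ext x
      simp only [Finset.mem_sdiff, Finset.mem_union]
      constructor
      · rintro ⟨hxI, hn⟩
        exact ⟨hxI, fun h => hn (Or.inl h)⟩
      · rintro ⟨hxI, hn⟩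
        refine ⟨hxI, fun h => ?_⟩
        rcases h with h | h
        · exact hn h
        · exact hBI x h hxI
    have ecard : (A ∪ B).card = A.card + B.card := Finset.card_union_of_disjoint hd
    have eIA : (I \ A).card = m - A.card := by rw [Finset.card_sdiff_of_subset hA]
    have hAm : A.card ≤ m := Finset.card_le_card hA
    have hBc : B.card ≤ c := Finset.card_le_card hB
    have eexp : S.card - (A.card + B.card) = (m - A.card) + (c - B.card) := by omega
    rw [e1, e2, ecard, eIA, eexp, pow_add, pow_add]
    ring
  rw [Finset.sum_congr rfl (fun A hA => Finset.sum_congr rfl (fun B hB => hAB A hA B hB))]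
  have hfac : ∀ A ∈ I.powerset,
      ∑ B ∈ (S \ I).powerset,
        (q ^ A.card * (1-q) ^ (m - A.card) *
          ((PMF.binomial (1/2) (by exact NNReal.half_le_self 1) (A.card)).map
            (fun k => (m - A.card) + k.val) z))
          * (q ^ B.card * (1-q) ^ (c - B.card))
      = q ^ A.card * (1-q) ^ (m - A.card) *
          ((PMF.binomial (1/2) (by exact NNReal.half_le_self 1) (A.card)).map
            (fun k => (m - A.card) + k.val) z) := by
    intro A hA
    rw [← Finset.mul_sum, powerset_weight_sum (S \ I) q hq, mul_one]
  rw [Finset.sum_congr rfl hfac]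
  rw [Finset.sum_powerset_apply_card (f := fun j => q ^ j * (1-q) ^ (m - j) *
    ((PMF.binomial (1/2) (by exact NNReal.half_le_self 1) j).map (fun k => (m - j) + k.val) z))]
  have hterm : ∀ j ∈ Finset.range (m + 1),
      m.choose j • (q ^ j * (1-q) ^ (m - j) *
        ((PMF.binomial (1/2) (by exact NNReal.half_le_self 1) j).map (fun k => (m - j) + k.val) z))
      = (m.choose j : ℝ≥0∞) * (1-q) ^ (m-j) * (q * (1/2)) ^ j *
          (∑ k ∈ Finset.range (j+1), (j.choose k : ℝ≥0∞) * (if z = (m-j) + k then 1 else 0)) := by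
    intro j hj
    rw [nsmul_eq_mul, binHalf_map, mul_pow]
    ring
  rw [Finset.sum_congr rfl hterm, core]

/-- Lemma 2 (first-step equivalence): the two random processes have the same
probability mass function. -/
theorem flipCount_eq_procSub (S I : Finset α) (hI : I ⊆ S) (hn : 1 ≤ S.card)
    (p : ℝ≥0∞) (hp2 : 1/2 < p) (hp1 : p ≤ 1) (hq : 2 * (1 - p) ≤ 1) :
    ∀ z : ℕ,
      flipCount p hp1 (fun a => decide (a ∈ I)) S.toList z
        = procSub S I (2 * (1 - p)) hq z := by
  intro z
  have hcount : List.countP (fun a => decide (a ∈ I)) S.toList = I.card := by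
    have h1 : Multiset.countP (· ∈ I) S.val = List.countP (fun a => decide (a ∈ I)) S.toList := by
      conv_lhs => rw [← Finset.coe_toList S]
      exact Multiset.coe_countP _ _
    rw [← h1, Multiset.countP_eq_card_filter, ← Finset.filter_val]
    have h2 : S.filter (· ∈ I) = I := by
      rw [Finset.filter_mem_eq_inter, Finset.inter_eq_right.2 hI]
    rw [h2]
    rfl
  have e1 : (2*(1-p)) * (1/2) = 1 - p := by
    rw [one_div, mul_comm 2 (1-p), mul_assoc,
      ENNReal.mul_inv_cancel two_ne_zero ENNReal.ofNat_ne_top, mul_one]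
  have e2 : (1-p) + (1 - 2*(1-p)) = p := by
    have haa : (1-p) ≤ 1 - (1-p) := by
      refine ENNReal.le_sub_of_add_le_left (ne_top_of_le_ne_top ENNReal.one_ne_top tsub_le_self) ?_
      calc (1-p) + (1-p) = 2 * (1-p) := (two_mul _).symm
        _ ≤ 1 := hq
    calc (1-p) + (1 - 2*(1-p))
        = (1-p) + (1 - ((1-p) + (1-p))) := by rw [← two_mul]
      _ = (1-p) + ((1 - (1-p)) - (1-p)) := by rw [tsub_add_eq_tsub_tsub]
      _ = ((1 - (1-p)) - (1-p)) + (1-p) := add_comm _ _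
      _ = 1 - (1-p) := tsub_add_cancel_of_le haa
      _ = p := ENNReal.sub_sub_cancel ENNReal.one_ne_top hp1
  rw [flipCount_apply, hcount, procSub_apply_closed S I hI, e1, e2]
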